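/- arXiv:math/0702006 — 4 statements merged into one kernel-verified Lean document; each statement's English description precedes it below -/
import Mathlib

section
/- Let G be a finite group, H a subgroup, K a field in which |H| is invertible, ζ : H → K^× a one-dimensional representation with space Z and fixed nonzero vector e ∈ Z. For any τ, τ' ∈ G, the cosets τ·K·e_ζ and τ'·K·e_ζ in K[G] coincide if and only if τH = τ'H. Consequently the map sending the coset gH-indexed basis element g ⊗ e of Ind_H^G Z to g·e_ζ extends to a K[G]-module isomorphism Ind_H^G Z → K[G]e_ζ. -/
/-- The symmetrizer `e_ζ = (1/|H|) Σ_{σ∈H} ζ(σ⁻¹) σ` in the group algebra `K[G]`. -/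
noncomputable def symmetrizer {K : Type*} [Field K] {G : Type*} [Group G]
    (H : Subgroup G) [Fintype H] (ζ : H →* Kˣ) : MonoidAlgebra K G :=
  (Fintype.card H : K)⁻¹ • ∑ σ : H, MonoidAlgebra.single (σ : G) ((ζ σ⁻¹ : Kˣ) : K)

/-- The left ideal of `K[G]` generated by the elements `h - ζ(h)·1` for `h ∈ H`;
the quotient of `K[G]` by it is the induced module `Ind_H^G Z = K[G] ⊗_{K[H]} Z`
of the one-dimensional representation `Z` of `H` with character `ζ` (identifying
`Z` with `K` via a fixed nonzero vector `e ∈ Z`, so `g ⊗ e` corresponds to the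
class of `single g 1`). -/
noncomputable def indRel {K : Type*} [Field K] {G : Type*} [Group G]
    (H : Subgroup G) (ζ : H →* Kˣ) : Submodule (MonoidAlgebra K G) (MonoidAlgebra K G) :=
  Submodule.span (MonoidAlgebra K G)
    {x | ∃ h : H, x = MonoidAlgebra.single (h : G) (1 : K) - ((ζ h : Kˣ) : K) • 1}

/-- The induced module `Ind_H^G Z` of the one-dimensional representation `ζ` of `H`. -/
noncomputable abbrev IndMod {K : Type*} [Field K] {G : Type*} [Group G]
    (H : Subgroup G) (ζ : H →* Kˣ) :=
  MonoidAlgebra K G ⧸ indRel H ζ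

section Aux

open MonoidAlgebra

variable {K : Type*} [Field K] {G : Type*} [Group G] (H : Subgroup G) [Fintype H] (ζ : H →* Kˣ)

lemma single_mul_symm (h : H) :
    MonoidAlgebra.single (h : G) (1:K) * symmetrizer H ζ
      = ((ζ h : Kˣ) : K) • symmetrizer H ζ := by
  unfold symmetrizer
  rw [mul_smul_comm, smul_comm, Finset.mul_sum]
  congr 1
  rw [Finset.smul_sum]
  refine Fintype.sum_equiv (Equiv.mulLeft h) _ _ fun σ => ?_
  simp only [Equiv.coe_mulLeft, smul_single', single_mul_single, one_mul, Subgroup.coe_mul,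
    mul_inv_rev, map_mul, map_inv]
  congr 1
  push_cast
  field_simp

open scoped Classical in
lemma symm_apply_one : (symmetrizer H ζ : MonoidAlgebra K G).coeff 1 = (Fintype.card H : K)⁻¹ := by
  unfold symmetrizer
  simp only [MonoidAlgebra.coeff_smul, MonoidAlgebra.coeff_sum, MonoidAlgebra.coeff_single]
  rw [Finsupp.smul_apply, Finset.sum_apply']
  rw [Finset.sum_eq_single (1 : H)]
  · simp
  · intro b _ hb
    rw [Finsupp.single_apply, if_neg (by simpa using hb)]
  · simp

open scoped Classical in
lemma symm_apply_not_mem {x : G} (hx : x ∉ H) :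
    (symmetrizer H ζ : MonoidAlgebra K G).coeff x = 0 := by
  unfold symmetrizer
  simp only [MonoidAlgebra.coeff_smul, MonoidAlgebra.coeff_sum, MonoidAlgebra.coeff_single]
  rw [Finsupp.smul_apply, Finset.sum_apply']
  rw [Finset.sum_eq_zero, smul_zero]
  intro σ _
  rw [Finsupp.single_apply, if_neg]
  rintro rfl
  exact hx σ.2

lemma one_sub_symm_eq (hH : (Fintype.card H : K) ≠ 0) :
    (1 : MonoidAlgebra K G) - symmetrizer H ζ
      = ∑ σ : H, (-((Fintype.card H : K)⁻¹ * ((ζ σ⁻¹ : Kˣ) : K))) •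
          (MonoidAlgebra.single (σ : G) (1 : K) - ((ζ σ : Kˣ) : K) • 1) := by
  have hz : ∀ σ : H, ((ζ σ⁻¹ : Kˣ) : K) * ((ζ σ : Kˣ) : K) = 1 := by
    intro σ
    norm_cast
    rw [← map_mul, inv_mul_cancel, map_one, Units.val_one]
  simp only [smul_sub]
  simp only [smul_smul, neg_mul, mul_assoc, hz, mul_one, neg_smul, sub_neg_eq_add,
    Finset.sum_add_distrib, Finset.sum_neg_distrib, Finset.sum_const, Finset.card_univ]
  have h1 : Fintype.card H • ((Fintype.card H : K)⁻¹ • (1 : MonoidAlgebra K G)) = 1 := by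
    rw [← Nat.cast_smul_eq_nsmul K, smul_smul, mul_inv_cancel₀ hH, one_smul]
  have h2 : ∑ σ : H, ((Fintype.card H : K)⁻¹ * ((ζ σ⁻¹ : Kˣ) : K)) •
      MonoidAlgebra.single (σ : G) (1 : K) = symmetrizer H ζ := by
    rw [symmetrizer, Finset.smul_sum]
    refine Finset.sum_congr rfl fun σ _ => ?_
    rw [smul_single', mul_one, smul_single']
  rw [h1, h2]
  abel

lemma one_sub_symm_mem (hH : (Fintype.card H : K) ≠ 0) :
    (1 : MonoidAlgebra K G) - symmetrizer H ζ ∈ indRel H ζ := by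
  rw [one_sub_symm_eq H ζ hH]
  refine Submodule.sum_mem _ fun σ _ => ?_
  have hgen : MonoidAlgebra.single (σ : G) (1 : K) - ((ζ σ : Kˣ) : K) • 1 ∈ indRel H ζ :=
    Submodule.subset_span ⟨σ, rfl⟩
  have := Submodule.smul_mem (indRel H ζ)
    (algebraMap K (MonoidAlgebra K G) (-((Fintype.card H : K)⁻¹ * ((ζ σ⁻¹ : Kˣ) : K)))) hgen
  rwa [algebraMap_smul] at this

end Aux

/-- The cosets `τ·K·e_ζ` and `τ'·K·e_ζ` in `K[G]` coincide iff
`τH = τ'H`; consequently `g ⊗ e ↦ g·e_ζ` extends to a `K[G]`-module isomorphism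
`Ind_H^G Z → K[G]e_ζ`. -/
theorem stmt6 {K : Type*} [Field K] {G : Type*} [Group G]
    (H : Subgroup G) [Fintype H] (hH : (Fintype.card H : K) ≠ 0) (ζ : H →* Kˣ) :
    (∀ τ τ' : G,
        Set.range (fun c : K => MonoidAlgebra.single τ (1 : K) * (c • symmetrizer H ζ))
          = Set.range (fun c : K => MonoidAlgebra.single τ' (1 : K) * (c • symmetrizer H ζ))
        ↔ τ⁻¹ * τ' ∈ H) ∧
    ∃ φ : IndMod H ζ ≃ₗ[MonoidAlgebra K G]
        Submodule.span (MonoidAlgebra K G) {symmetrizer H ζ},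
      ∀ g : G,
        (φ (Submodule.Quotient.mk (MonoidAlgebra.single g (1 : K))) : MonoidAlgebra K G)
          = MonoidAlgebra.single g (1 : K) * symmetrizer H ζ := by
  constructor
  · intro τ τ'
    constructor
    · intro hr
      by_contra hmem
      have h1 : MonoidAlgebra.single τ (1:K) * ((1:K) • symmetrizer H ζ) ∈
          Set.range (fun c : K => MonoidAlgebra.single τ' (1 : K) * (c • symmetrizer H ζ)) := by
        rw [← hr]; exact ⟨1, rfl⟩
      obtain ⟨c, hc⟩ := h1
      rw [one_smul] at hc
      have h2 : (MonoidAlgebra.single τ' (1:K) * (c • symmetrizer H ζ)).coeff τ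
          = (MonoidAlgebra.single τ (1:K) * symmetrizer H ζ).coeff τ :=
        congrArg (fun v : MonoidAlgebra K G => v.coeff τ) hc
      rw [MonoidAlgebra.single_mul_apply, MonoidAlgebra.single_mul_apply, one_mul, one_mul,
        inv_mul_cancel, symm_apply_one, MonoidAlgebra.coeff_smul_apply, smul_eq_mul] at h2
      have hnm : τ'⁻¹ * τ ∉ H := by
        intro hx
        exact hmem (by simpa using H.inv_mem hx)
      rw [symm_apply_not_mem H ζ hnm, mul_zero] at h2
      exact hH (by simpa using (inv_eq_zero.mp h2.symm))
    · intro hmem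
      set h : H := ⟨τ⁻¹ * τ', hmem⟩
      have hτ' : MonoidAlgebra.single τ' (1:K)
          = MonoidAlgebra.single τ (1:K) * MonoidAlgebra.single (h : G) (1:K) := by
        rw [MonoidAlgebra.single_mul_single, one_mul]
        congr 1
        simp [h, mul_inv_cancel_left]
      have key : ∀ c : K, MonoidAlgebra.single τ' (1:K) * (c • symmetrizer H ζ)
          = MonoidAlgebra.single τ (1:K) * ((((ζ h : Kˣ) : K) * c) • symmetrizer H ζ) := by
        intro c
        rw [hτ', mul_assoc, mul_smul_comm, single_mul_symm, smul_smul, mul_comm c,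
          mul_smul_comm]
      ext x
      constructor
      · rintro ⟨c, rfl⟩
        refine ⟨((ζ h⁻¹ : Kˣ) : K) * c, ?_⟩
        dsimp only
        rw [key]
        congr 2
        rw [← mul_assoc, ← Units.val_mul, ← map_mul, mul_inv_cancel, map_one, Units.val_one,
          one_mul]
      · rintro ⟨c, rfl⟩
        exact ⟨((ζ h : Kˣ) : K) * c, (key c).symm⟩
  · -- the isomorphism
    have hmem : ∀ r : MonoidAlgebra K G,
        r • symmetrizer H ζ ∈ Submodule.span (MonoidAlgebra K G) {symmetrizer H ζ} :=
      fun r => Submodule.smul_mem _ r (Submodule.mem_span_singleton_self _)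
    set ψ : MonoidAlgebra K G →ₗ[MonoidAlgebra K G]
        Submodule.span (MonoidAlgebra K G) {symmetrizer H ζ} :=
      (LinearMap.toSpanSingleton (MonoidAlgebra K G) (MonoidAlgebra K G)
        (symmetrizer H ζ)).codRestrict _ hmem with hψ
    have hψ_apply : ∀ r : MonoidAlgebra K G, (ψ r : MonoidAlgebra K G)
        = r * symmetrizer H ζ := fun r => rfl
    have hle : indRel H ζ ≤ LinearMap.ker ψ := by
      rw [indRel, Submodule.span_le]
      rintro _ ⟨σ, rfl⟩
      rw [SetLike.mem_coe, LinearMap.mem_ker]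
      ext
      rw [hψ_apply, sub_mul, single_mul_symm, smul_mul_assoc, one_mul]
      simp
    have hge : LinearMap.ker ψ ≤ indRel H ζ := by
      intro x hx
      rw [LinearMap.mem_ker] at hx
      have hx' : x * symmetrizer H ζ = 0 := by
        have := congrArg (Subtype.val) hx
        rw [hψ_apply] at this
        simpa using this
      have : x = x • ((1 : MonoidAlgebra K G) - symmetrizer H ζ) := by
        rw [smul_sub, smul_eq_mul, smul_eq_mul, mul_one, hx', sub_zero]
      rw [this]
      exact Submodule.smul_mem _ x (one_sub_symm_mem H ζ hH)
    set f := (indRel H ζ).liftQ ψ hle with hf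
    have hinj : Function.Injective f :=
      LinearMap.ker_eq_bot.mp (Submodule.ker_liftQ_eq_bot _ _ _ hge)
    have hsurj : Function.Surjective f := by
      rintro ⟨y, hy⟩
      obtain ⟨r, rfl⟩ := Submodule.mem_span_singleton.mp hy
      exact ⟨Submodule.Quotient.mk r, rfl⟩
    refine ⟨LinearEquiv.ofBijective f ⟨hinj, hsurj⟩, fun g => ?_⟩
    show ((f (Submodule.Quotient.mk (MonoidAlgebra.single g (1:K)))) : MonoidAlgebra K G) = _
    rw [hf, Submodule.liftQ_apply, hψ_apply]
end

section
/- Let μ be a partition of m and S_μ ≤ S_m the corresponding Young subgroup. Let λ be a partition of m and Q, Q' standard tableaux on λ. Let ν_μ : {1,...,m} → ℕ send i to the row of the row-reading filling t_μ containing i. If ν_μ ∘ Q = ν_μ ∘ Q', then the symmetrized Specht polynomials agree: b_μ·Δ_Q = b_μ·Δ_{Q'}, where b_μ = (1/|S_μ|) Σ_{σ∈S_μ} σ and Δ_Q is the Specht polynomial of Q. -/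
open MvPolynomial Finset

/-- `nu μ i` is the (1-indexed) row of the row-reading numbering `t_μ` containing the
number `i ∈ {1,…,m}`, where the partition `μ` is given by its sequence of row lengths. -/
def nu (μ : ℕ → ℕ) (i : ℕ) : ℕ :=
  ((Finset.range i).filter (fun r => ∑ k ∈ Finset.range (r + 1), μ k < i)).card + 1

/-- The cells of the Young diagram with row lengths `lam` (rows and columns 0-indexed). -/
def cells (lam : ℕ → ℕ) (m : ℕ) : Finset (ℕ × ℕ) :=
  (Finset.range m ×ˢ Finset.range m).filter (fun p => p.2 < lam p.1)

/-- Ordered pairs of distinct cells lying in the same column. -/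
def colPairs (lam : ℕ → ℕ) (m : ℕ) : Finset ((ℕ × ℕ) × (ℕ × ℕ)) :=
  ((cells lam m) ×ˢ (cells lam m)).filter (fun pq => pq.1.2 = pq.2.2 ∧ pq.1.1 < pq.2.1)

/-- The Specht polynomial of a filling `Q` of the diagram `lam`: the product over the
columns of the Vandermonde determinants of the variables indexed by the column entries. -/
noncomputable def specht (lam : ℕ → ℕ) (m : ℕ) (Q : ℕ × ℕ → ℕ) : MvPolynomial ℕ ℂ :=
  ∏ pq ∈ colPairs lam m, (X (Q pq.1) - X (Q pq.2))

/-- `Q` is a standard tableau on the diagram `lam` with `m` boxes: a bijective filling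
by `1,…,m`, strictly increasing along rows and down columns. -/
def IsStandard (lam : ℕ → ℕ) (m : ℕ) (Q : ℕ × ℕ → ℕ) : Prop :=
  (cells lam m).image Q = Finset.Icc 1 m ∧ Set.InjOn Q (cells lam m) ∧
  (∀ i j, (i, j + 1) ∈ cells lam m → Q (i, j) < Q (i, j + 1)) ∧
  (∀ i j, (i + 1, j) ∈ cells lam m → Q (i, j) < Q (i + 1, j))

/-- The Young subgroup `S_μ` of `S_m`, realized inside `Equiv.Perm (Fin m)` (where
`⟨i, _⟩ : Fin m` corresponds to the letter `i+1 ∈ {1,…,m}`): permutations preserving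
the rows of `t_μ`. -/
def youngFinset (μ : ℕ → ℕ) (m : ℕ) : Finset (Equiv.Perm (Fin m)) :=
  Finset.univ.filter (fun π => ∀ i : Fin m, nu μ ((π i : ℕ) + 1) = nu μ ((i : ℕ) + 1))

/-- The action of `π ∈ S_m` on the letters `{1,…,m} ⊂ ℕ`. -/
def permFun (m : ℕ) (π : Equiv.Perm (Fin m)) (i : ℕ) : ℕ :=
  if h : 1 ≤ i ∧ i ≤ m then (π ⟨i - 1, by omega⟩ : ℕ) + 1 else i


lemma permFun_mul (m : ℕ) (π₁ π₂ : Equiv.Perm (Fin m)) :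
    permFun m (π₁ * π₂) = permFun m π₁ ∘ permFun m π₂ := by
  funext i
  by_cases h : 1 ≤ i ∧ i ≤ m
  · simp only [permFun, dif_pos h, Function.comp]
    have h2 : 1 ≤ (π₂ ⟨i - 1, by omega⟩ : ℕ) + 1 ∧ (π₂ ⟨i - 1, by omega⟩ : ℕ) + 1 ≤ m :=
      ⟨by omega, (π₂ ⟨i - 1, by omega⟩).isLt⟩
    rw [dif_pos h2]
    have : (⟨(π₂ ⟨i - 1, by omega⟩ : ℕ) + 1 - 1, by omega⟩ : Fin m) = π₂ ⟨i - 1, by omega⟩ := by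
      apply Fin.ext; simp
    rw [this]
    rfl
  · simp only [permFun, dif_neg h, Function.comp, dif_neg h]

lemma young_mul_mem (μ : ℕ → ℕ) (m : ℕ) {π₁ π₂ : Equiv.Perm (Fin m)}
    (h₁ : π₁ ∈ youngFinset μ m) (h₂ : π₂ ∈ youngFinset μ m) : π₁ * π₂ ∈ youngFinset μ m := by
  simp only [youngFinset, Finset.mem_filter, Finset.mem_univ, true_and] at *
  intro i
  rw [Equiv.Perm.mul_apply, h₁ (π₂ i), h₂ i]

lemma young_inv_mem (μ : ℕ → ℕ) (m : ℕ) {π : Equiv.Perm (Fin m)}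
    (h : π ∈ youngFinset μ m) : π⁻¹ ∈ youngFinset μ m := by
  simp only [youngFinset, Finset.mem_filter, Finset.mem_univ, true_and] at *
  intro i
  have := h (π⁻¹ i)
  rw [← Equiv.Perm.mul_apply, mul_inv_cancel, Equiv.Perm.one_apply] at this
  exact this.symm

/-- If standard tableaux `Q, Q'` on `λ ⊢ m` satisfy
`ν_μ ∘ Q = ν_μ ∘ Q'`, then the symmetrized Specht polynomials agree:
`b_μ·Δ_Q = b_μ·Δ_{Q'}` where `b_μ = (1/|S_μ|) Σ_{σ∈S_μ} σ`. -/
theorem stmt9 (m : ℕ) (μ lam : ℕ → ℕ)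
    (hμa : Antitone μ) (hμm : ∑ k ∈ Finset.range m, μ k = m) (hμ0 : ∀ r, m ≤ r → μ r = 0)
    (hla : Antitone lam) (hlm : ∑ k ∈ Finset.range m, lam k = m) (hl0 : ∀ r, m ≤ r → lam r = 0)
    (Q Q' : ℕ × ℕ → ℕ) (hQ : IsStandard lam m Q) (hQ' : IsStandard lam m Q')
    (hsame : ∀ p ∈ cells lam m, nu μ (Q p) = nu μ (Q' p)) :
    ((youngFinset μ m).card : ℂ)⁻¹ •
        ∑ π ∈ youngFinset μ m, rename (permFun m π) (specht lam m Q)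
      = ((youngFinset μ m).card : ℂ)⁻¹ •
        ∑ π ∈ youngFinset μ m, rename (permFun m π) (specht lam m Q') := by
  classical
  obtain ⟨hQim, hQinj, -, -⟩ := hQ
  obtain ⟨hQ'im, hQ'inj, -, -⟩ := hQ'
  have hQmem : ∀ p ∈ cells lam m, 1 ≤ Q p ∧ Q p ≤ m := by
    intro p hp
    have : Q p ∈ Finset.Icc 1 m := hQim ▸ Finset.mem_image_of_mem Q hp
    simpa [Finset.mem_Icc] using this
  have hQ'mem : ∀ p ∈ cells lam m, 1 ≤ Q' p ∧ Q' p ≤ m := by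
    intro p hp
    have : Q' p ∈ Finset.Icc 1 m := hQ'im ▸ Finset.mem_image_of_mem Q' hp
    simpa [Finset.mem_Icc] using this
  have hsurj : ∀ i : Fin m, ∃ p, p ∈ cells lam m ∧ Q p = (i : ℕ) + 1 := by
    intro i
    have hi : ((i : ℕ) + 1) ∈ Finset.Icc 1 m := by
      simp only [Finset.mem_Icc]; exact ⟨by omega, i.isLt⟩
    rw [← hQim] at hi
    simpa [Finset.mem_image] using hi
  choose P hPmem hPQ using hsurj
  have hfval : ∀ i : Fin m, Q' (P i) - 1 < m := by
    intro i; have := hQ'mem _ (hPmem i); omega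
  set f : Fin m → Fin m := fun i => ⟨Q' (P i) - 1, hfval i⟩ with hf
  have hfinj : Function.Injective f := by
    intro i j hij
    have hi := hQ'mem _ (hPmem i)
    have hj := hQ'mem _ (hPmem j)
    have hval : Q' (P i) - 1 = Q' (P j) - 1 := congrArg Fin.val hij
    have hQQ : Q' (P i) = Q' (P j) := by omega
    have hp : P i = P j := hQ'inj (hPmem i) (hPmem j) hQQ
    have : (i : ℕ) + 1 = (j : ℕ) + 1 := by rw [← hPQ i, ← hPQ j, hp]
    exact Fin.ext (by omega)
  set σ : Equiv.Perm (Fin m) := Equiv.ofBijective f (Finite.injective_iff_bijective.mp hfinj)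
    with hσ
  have hσapp : ∀ i, σ i = f i := fun i => rfl
  have hσy : σ ∈ youngFinset μ m := by
    simp only [youngFinset, Finset.mem_filter, Finset.mem_univ, true_and]
    intro i
    have h1 := hQ'mem _ (hPmem i)
    have hval : (σ i : ℕ) + 1 = Q' (P i) := by
      rw [hσapp]; simp only [hf]; omega
    rw [hval, ← hsame _ (hPmem i), hPQ i]
  have hperm : ∀ p ∈ cells lam m, permFun m σ (Q p) = Q' p := by
    intro p hp
    have hr := hQmem p hp
    rw [permFun, dif_pos hr]
    have hPi : P ⟨Q p - 1, by omega⟩ = p := by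
      apply hQinj (hPmem _) hp
      rw [hPQ]; simp; omega
    have h2 := hQ'mem _ hp
    have : (σ ⟨Q p - 1, by omega⟩ : ℕ) = Q' p - 1 := by
      rw [hσapp]; simp only [hf, hPi]
    rw [this]; omega
  have hspecht : specht lam m Q' = rename (permFun m σ) (specht lam m Q) := by
    rw [specht, specht, map_prod]
    apply Finset.prod_congr rfl
    intro pq hpq
    have hc : pq.1 ∈ cells lam m ∧ pq.2 ∈ cells lam m := by
      simp only [colPairs, Finset.mem_filter, Finset.mem_product] at hpq
      exact ⟨hpq.1.1, hpq.1.2⟩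
    rw [map_sub, rename_X, rename_X, hperm _ hc.1, hperm _ hc.2]
  rw [hspecht]
  congr 1
  have key : ∀ π : Equiv.Perm (Fin m),
      rename (permFun m π) ((rename (permFun m σ)) (specht lam m Q))
        = rename (permFun m (π * σ)) (specht lam m Q) := by
    intro π
    rw [rename_rename, permFun_mul]
  simp_rw [key]
  refine Finset.sum_nbij' (fun π => π * σ⁻¹) (fun π => π * σ) ?_ ?_ ?_ ?_ ?_
  · intro π hπ; exact young_mul_mem μ m hπ (young_inv_mem μ m hσy)
  · intro π hπ; exact young_mul_mem μ m hπ hσy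
  · intro π _; group
  · intro π _; group
  · intro π hπ
    congr 1
    group
end

section
/- Let μ, λ be partitions of m, Q a numbering on λ, and suppose there exist x ≠ y in the same row of t_μ that lie in the same column of Q. Then the Young symmetrization vanishes: b_μ·Δ_Q = 0, where b_μ = (1/|S_μ|) Σ_{σ∈S_μ} σ ∈ ℂ[S_m] and Δ_Q is the Specht polynomial of Q. -/
open MvPolynomial Finset

/-- `Q` is a numbering on the diagram `lam` with `m` boxes: a bijective filling
by `1,…,m`. -/
def IsNumbering (lam : ℕ → ℕ) (m : ℕ) (Q : ℕ × ℕ → ℕ) : Prop :=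
  (cells lam m).image Q = Finset.Icc 1 m ∧ Set.InjOn Q (cells lam m)

/- ### Auxiliary lemmas -/

lemma mem_cells_iff {lam : ℕ → ℕ} {m : ℕ} {a : ℕ × ℕ} :
    a ∈ cells lam m ↔ a.1 < m ∧ a.2 < m ∧ a.2 < lam a.1 := by
  simp [cells, Finset.mem_filter, Finset.mem_product, and_assoc]

lemma mem_colPairs_iff {lam : ℕ → ℕ} {m : ℕ} {ab : (ℕ × ℕ) × (ℕ × ℕ)} :
    ab ∈ colPairs lam m ↔
      ab.1 ∈ cells lam m ∧ ab.2 ∈ cells lam m ∧ ab.1.2 = ab.2.2 ∧ ab.1.1 < ab.2.1 := by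
  simp [colPairs, Finset.mem_filter, Finset.mem_product, and_assoc]

/-- Swapping the two variables indexed by entries of `Q` in the same column negates the
Specht polynomial. -/
lemma key_swap (m : ℕ) (lam : ℕ → ℕ) (hla : Antitone lam)
    (Q : ℕ × ℕ → ℕ) (hinj : Set.InjOn Q (cells lam m))
    (r s c0 : ℕ) (hrs : r < s)
    (hp : ((r, c0) : ℕ × ℕ) ∈ cells lam m) (hq : ((s, c0) : ℕ × ℕ) ∈ cells lam m) :
    rename (Equiv.swap (Q (r, c0)) (Q (s, c0))) (specht lam m Q) = - specht lam m Q := by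
  classical
  set f := Equiv.swap (Q (r, c0)) (Q (s, c0)) with hf
  set g := Equiv.swap ((r, c0) : ℕ × ℕ) ((s, c0) : ℕ × ℕ) with hg
  have hpq : ((r, c0) : ℕ × ℕ) ≠ ((s, c0) : ℕ × ℕ) := by
    simp [Prod.ext_iff]; omega
  have hQne : Q (r, c0) ≠ Q (s, c0) := fun h => hpq (hinj hp hq h)
  -- g maps cells to cells, preserves columns
  have hgval : ∀ a : ℕ × ℕ, g a = if a = (r, c0) then (s, c0) else if a = (s, c0) then (r, c0) else a := by
    intro a; rw [hg, Equiv.swap_apply_def]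
  have hgcell : ∀ a ∈ cells lam m, g a ∈ cells lam m := by
    intro a ha; rw [hgval]; split_ifs <;> assumption
  have hg2 : ∀ a : ℕ × ℕ, (g a).2 = a.2 := by
    intro a; rw [hgval]; split_ifs with h1 h2 <;> simp_all
  have hginj : Function.Injective g := g.injective
  have hgQ : ∀ a ∈ cells lam m, f (Q a) = Q (g a) := by
    intro a ha
    rw [hgval]
    split_ifs with h1 h2
    · subst h1; rw [hf, Equiv.swap_apply_left]
    · subst h2; rw [hf, Equiv.swap_apply_right]
    · rw [hf]
      exact Equiv.swap_apply_of_ne_of_ne (fun h => h1 (hinj ha hp h)) (fun h => h2 (hinj ha hq h))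
  -- Step 1: rename as a product over colPairs
  have step1 : rename f (specht lam m Q) =
      ∏ ab ∈ colPairs lam m, (X (Q (g ab.1)) - X (Q (g ab.2)) : MvPolynomial ℕ ℂ) := by
    rw [specht, map_prod]
    refine Finset.prod_congr rfl ?_
    intro ab hab
    rw [mem_colPairs_iff] at hab
    rw [map_sub, rename_X, rename_X, hgQ _ hab.1, hgQ _ hab.2.1]
  -- The reindexing involution on column pairs
  set E : (ℕ × ℕ) × (ℕ × ℕ) → (ℕ × ℕ) × (ℕ × ℕ) :=
    fun ab => if (g ab.1).1 < (g ab.2).1 then (g ab.1, g ab.2) else (g ab.2, g ab.1) with hE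
  have hgne : ∀ ab ∈ colPairs lam m, (g ab.1).1 ≠ (g ab.2).1 := by
    intro ab hab h
    rw [mem_colPairs_iff] at hab
    have h2 : (g ab.1).2 = (g ab.2).2 := by rw [hg2, hg2]; exact hab.2.2.1
    have : g ab.1 = g ab.2 := Prod.ext h h2
    have h3 : ab.1 = ab.2 := hginj this
    rw [h3] at hab
    exact lt_irrefl _ hab.2.2.2
  have hEmem : ∀ ab ∈ colPairs lam m, E ab ∈ colPairs lam m := by
    intro ab hab
    have hne := hgne ab hab
    rw [mem_colPairs_iff] at hab
    simp only [hE]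
    by_cases h : (g ab.1).1 < (g ab.2).1
    · rw [if_pos h, mem_colPairs_iff]
      exact ⟨hgcell _ hab.1, hgcell _ hab.2.1, by rw [hg2, hg2]; exact hab.2.2.1, h⟩
    · rw [if_neg h, mem_colPairs_iff]
      refine ⟨hgcell _ hab.2.1, hgcell _ hab.1, by rw [hg2, hg2]; exact hab.2.2.1.symm, ?_⟩
      show (g ab.2).1 < (g ab.1).1
      omega
  have hEE : ∀ ab ∈ colPairs lam m, E (E ab) = ab := by
    intro ab hab
    have hne := hgne ab hab
    have hlt := (mem_colPairs_iff.mp hab).2.2.2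
    have h1 : g (g ab.1) = ab.1 := by rw [hg]; exact Equiv.swap_apply_self _ _ _
    have h2 : g (g ab.2) = ab.2 := by rw [hg]; exact Equiv.swap_apply_self _ _ _
    simp only [hE]
    by_cases h : (g ab.1).1 < (g ab.2).1
    · rw [if_pos h]
      simp only [h1, h2]
      rw [if_pos hlt]
    · rw [if_neg h]
      simp only [h1, h2]
      rw [if_neg (by omega : ¬ ab.2.1 < ab.1.1)]
  -- Step 2: pull out signs
  have step2 : (∏ ab ∈ colPairs lam m, (X (Q (g ab.1)) - X (Q (g ab.2)) : MvPolynomial ℕ ℂ)) =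
      (∏ ab ∈ colPairs lam m,
        (if (g ab.1).1 < (g ab.2).1 then (1 : MvPolynomial ℕ ℂ) else -1)) *
      ∏ ab ∈ colPairs lam m, (X (Q (E ab).1) - X (Q (E ab).2) : MvPolynomial ℕ ℂ) := by
    rw [← Finset.prod_mul_distrib]
    refine Finset.prod_congr rfl ?_
    intro ab hab
    simp only [hE]
    by_cases h : (g ab.1).1 < (g ab.2).1
    · rw [if_pos h, if_pos h, one_mul]
    · rw [if_neg h, if_neg h, neg_one_mul, neg_sub]
  have step3 : (∏ ab ∈ colPairs lam m, (X (Q (E ab).1) - X (Q (E ab).2) : MvPolynomial ℕ ℂ)) =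
      specht lam m Q := by
    rw [specht]
    exact Finset.prod_nbij' E E hEmem hEmem hEE hEE (fun ab _ => rfl)
  -- Step 3: compute the sign
  have hrm : s < m ∧ c0 < m ∧ c0 < lam s := by
    have := mem_cells_iff.mp hq; simpa using this
  have hcellk : ∀ k, r < k → k < s → ((k, c0) : ℕ × ℕ) ∈ cells lam m := by
    intro k h1 h2
    rw [mem_cells_iff]
    exact ⟨by omega, hrm.2.1, lt_of_lt_of_le hrm.2.2 (hla (le_of_lt h2))⟩
  have hgl : g ((r, c0) : ℕ × ℕ) = (s, c0) := Equiv.swap_apply_left _ _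
  have hgr : g ((s, c0) : ℕ × ℕ) = (r, c0) := Equiv.swap_apply_right _ _
  have hsign : (∏ ab ∈ colPairs lam m,
      (if (g ab.1).1 < (g ab.2).1 then (1 : MvPolynomial ℕ ℂ) else -1)) = -1 := by
    have hchar : (colPairs lam m).filter (fun ab => ¬ (g ab.1).1 < (g ab.2).1) =
        insert ((((r, c0) : ℕ × ℕ)), (((s, c0) : ℕ × ℕ)))
          (((Finset.Ioo r s).image fun k => ((((r, c0) : ℕ × ℕ)), (((k, c0) : ℕ × ℕ)))) ∪
           ((Finset.Ioo r s).image fun k => ((((k, c0) : ℕ × ℕ)), (((s, c0) : ℕ × ℕ))))) := by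
      ext ab
      simp only [Finset.mem_filter, mem_colPairs_iff, Finset.mem_insert, Finset.mem_union,
        Finset.mem_image, Finset.mem_Ioo]
      constructor
      · rintro ⟨⟨h1, h2, h3, h4⟩, h5⟩
        by_cases har : ab.1 = (r, c0)
        · by_cases hbs : ab.2 = (s, c0)
          · left; rw [← har, ← hbs]
          · right; left
            have hb2 : ab.2.2 = c0 := by rw [← h3, har]
            have hb1 : r < ab.2.1 := by rw [har] at h4; exact h4
            have hgb : g ab.2 = ab.2 := by
              refine Equiv.swap_apply_of_ne_of_ne (fun h => ?_) hbs
              rw [h] at hb1; simp at hb1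
            have h5' : ¬ (s < ab.2.1) := by rw [har, hgl, hgb] at h5; exact h5
            have hne : ab.2.1 ≠ s := fun h => hbs (Prod.ext h hb2)
            exact ⟨ab.2.1, ⟨hb1, by omega⟩, Prod.ext har.symm (Prod.ext rfl hb2.symm)⟩
        · by_cases has : ab.1 = (s, c0)
          · exfalso
            have hb1 : s < ab.2.1 := by rw [has] at h4; exact h4
            have hgb : g ab.2 = ab.2 := by
              refine Equiv.swap_apply_of_ne_of_ne (fun h => ?_) (fun h => ?_)
              · rw [h] at hb1; simp at hb1; omega
              · rw [h] at hb1; simp at hb1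
            have h5' : ¬ (r < ab.2.1) := by rw [has, hgr, hgb] at h5; exact h5
            omega
          · have hga : g ab.1 = ab.1 := Equiv.swap_apply_of_ne_of_ne har has
            by_cases hbr : ab.2 = (r, c0)
            · exfalso
              have ha1 : ab.1.1 < r := by rw [hbr] at h4; exact h4
              have h5' : ¬ (ab.1.1 < s) := by rw [hga, hbr, hgl] at h5; exact h5
              omega
            · by_cases hbs : ab.2 = (s, c0)
              · right; right
                have ha2 : ab.1.2 = c0 := by rw [h3, hbs]
                have ha1 : ab.1.1 < s := by rw [hbs] at h4; exact h4
                have hner : ab.1.1 ≠ r := fun h => har (Prod.ext h ha2)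
                have h5' : ¬ (ab.1.1 < r) := by rw [hga, hbs, hgr] at h5; exact h5
                exact ⟨ab.1.1, ⟨by omega, ha1⟩, Prod.ext (Prod.ext rfl ha2.symm) hbs.symm⟩
              · exfalso
                have hgb : g ab.2 = ab.2 := Equiv.swap_apply_of_ne_of_ne hbr hbs
                rw [hga, hgb] at h5; exact h5 h4
      · rintro (heq | ⟨k, ⟨hk1, hk2⟩, heq⟩ | ⟨k, ⟨hk1, hk2⟩, heq⟩)
        · subst heq
          refine ⟨⟨hp, hq, rfl, hrs⟩, ?_⟩
          show ¬ ((g (r, c0)).1 < (g (s, c0)).1)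
          rw [hgl, hgr]; show ¬ (s < r); omega
        · subst heq
          have hgk : g ((k, c0) : ℕ × ℕ) = (k, c0) :=
            Equiv.swap_apply_of_ne_of_ne (by simp [Prod.ext_iff]; omega) (by simp [Prod.ext_iff]; omega)
          refine ⟨⟨hp, hcellk k hk1 hk2, rfl, hk1⟩, ?_⟩
          show ¬ ((g (r, c0)).1 < (g (k, c0)).1)
          rw [hgl, hgk]; show ¬ (s < k); omega
        · subst heq
          have hgk : g ((k, c0) : ℕ × ℕ) = (k, c0) :=
            Equiv.swap_apply_of_ne_of_ne (by simp [Prod.ext_iff]; omega) (by simp [Prod.ext_iff]; omega)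
          refine ⟨⟨hcellk k hk1 hk2, hq, rfl, hk2⟩, ?_⟩
          show ¬ ((g (k, c0)).1 < (g (s, c0)).1)
          rw [hgk, hgr]; show ¬ (k < r); omega
    have hcard : ((colPairs lam m).filter (fun ab => ¬ (g ab.1).1 < (g ab.2).1)).card =
        2 * (s - r - 1) + 1 := by
      rw [hchar]
      have hinjA : Function.Injective (fun k => ((((r, c0) : ℕ × ℕ)), (((k, c0) : ℕ × ℕ)))) := by
        intro a b h; simpa [Prod.ext_iff] using h
      have hinjB : Function.Injective (fun k => ((((k, c0) : ℕ × ℕ)), (((s, c0) : ℕ × ℕ)))) := by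
        intro a b h; simpa [Prod.ext_iff] using h
      have hnm : (((r, c0) : ℕ × ℕ), ((s, c0) : ℕ × ℕ)) ∉
          ((Finset.Ioo r s).image fun k => ((((r, c0) : ℕ × ℕ)), (((k, c0) : ℕ × ℕ)))) ∪
          ((Finset.Ioo r s).image fun k => ((((k, c0) : ℕ × ℕ)), (((s, c0) : ℕ × ℕ)))) := by
        simp [Prod.ext_iff]
      have hdisj : Disjoint
          ((Finset.Ioo r s).image fun k => ((((r, c0) : ℕ × ℕ)), (((k, c0) : ℕ × ℕ))))
          ((Finset.Ioo r s).image fun k => ((((k, c0) : ℕ × ℕ)), (((s, c0) : ℕ × ℕ)))) := by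
        rw [Finset.disjoint_left]
        intro a ha hb
        simp only [Finset.mem_image, Finset.mem_Ioo] at ha hb
        obtain ⟨k, hk, rfl⟩ := ha
        obtain ⟨k', hk', heq⟩ := hb
        rw [Prod.ext_iff, Prod.ext_iff, Prod.ext_iff] at heq
        simp at heq
        omega
      rw [Finset.card_insert_of_notMem hnm, Finset.card_union_of_disjoint hdisj,
        Finset.card_image_of_injective _ hinjA, Finset.card_image_of_injective _ hinjB,
        Nat.card_Ioo]
      omega
    rw [Finset.prod_ite]
    rw [Finset.prod_const, Finset.prod_const, one_pow, one_mul, hcard]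
    exact Odd.neg_one_pow (by rw [Nat.odd_iff]; omega)
  rw [step1, step2, step3, hsign, neg_one_mul]

/-- Let `Q` be a numbering on `λ ⊢ m`.  If two distinct numbers `x, y`
in the same row of `t_μ` lie in the same column of `Q`, then the Young symmetrization of
the Specht polynomial vanishes: `b_μ·Δ_Q = 0`. -/
theorem stmt11 (m : ℕ) (μ lam : ℕ → ℕ)
    (hμa : Antitone μ) (hμm : ∑ k ∈ Finset.range m, μ k = m) (hμ0 : ∀ r, m ≤ r → μ r = 0)
    (hla : Antitone lam) (hlm : ∑ k ∈ Finset.range m, lam k = m) (hl0 : ∀ r, m ≤ r → lam r = 0)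
    (Q : ℕ × ℕ → ℕ) (hQ : IsNumbering lam m Q)
    (x y : ℕ) (hxy : x ≠ y) (hrow : nu μ x = nu μ y)
    (hcol : ∃ p ∈ cells lam m, ∃ q ∈ cells lam m, p.2 = q.2 ∧ Q p = x ∧ Q q = y) :
    ((youngFinset μ m).card : ℂ)⁻¹ •
        ∑ π ∈ youngFinset μ m, rename (permFun m π) (specht lam m Q) = 0 := by
  classical
  obtain ⟨p, hp, q, hq, hc, hQp, hQq⟩ := hcol
  -- x and y lie in {1, …, m}
  have hx : x ∈ Finset.Icc 1 m := by
    rw [← hQ.1, ← hQp]; exact Finset.mem_image_of_mem Q hp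
  have hy : y ∈ Finset.Icc 1 m := by
    rw [← hQ.1, ← hQq]; exact Finset.mem_image_of_mem Q hq
  rw [Finset.mem_Icc] at hx hy
  have hxm : x - 1 < m := by omega
  have hym : y - 1 < m := by omega
  -- the transposition τ = (x y) ∈ S_μ
  set τ : Equiv.Perm (Fin m) := Equiv.swap ⟨x - 1, hxm⟩ ⟨y - 1, hym⟩ with hτ
  have hτY : τ ∈ youngFinset μ m := by
    simp only [youngFinset, Finset.mem_filter, Finset.mem_univ, true_and]
    intro i
    rcases eq_or_ne i ⟨x - 1, hxm⟩ with rfl | hix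
    · rw [hτ, Equiv.swap_apply_left]
      show nu μ ((y - 1) + 1) = nu μ ((x - 1) + 1)
      rw [show (y - 1) + 1 = y by omega, show (x - 1) + 1 = x by omega]
      exact hrow.symm
    · rcases eq_or_ne i ⟨y - 1, hym⟩ with rfl | hiy
      · rw [hτ, Equiv.swap_apply_right]
        show nu μ ((x - 1) + 1) = nu μ ((y - 1) + 1)
        rw [show (y - 1) + 1 = y by omega, show (x - 1) + 1 = x by omega]
        exact hrow
      · rw [hτ, Equiv.swap_apply_of_ne_of_ne hix hiy]
  -- permFun of τ is the swap of the letters x and y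
  have hperm : permFun m τ = ⇑(Equiv.swap x y) := by
    funext i
    by_cases h : 1 ≤ i ∧ i ≤ m
    · rw [permFun, dif_pos h]
      by_cases hix : i = x
      · have : (⟨i - 1, by omega⟩ : Fin m) = ⟨x - 1, hxm⟩ := by
          apply Fin.ext; show i - 1 = x - 1; omega
        rw [this, hτ, Equiv.swap_apply_left]
        subst hix
        rw [Equiv.swap_apply_left]
        show (y - 1) + 1 = y; omega
      · by_cases hiy : i = y
        · have : (⟨i - 1, by omega⟩ : Fin m) = ⟨y - 1, hym⟩ := by
            apply Fin.ext; show i - 1 = y - 1; omega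
          rw [this, hτ, Equiv.swap_apply_right]
          subst hiy
          rw [Equiv.swap_apply_right]
          show (x - 1) + 1 = x; omega
        · have h1 : (⟨i - 1, by omega⟩ : Fin m) ≠ ⟨x - 1, hxm⟩ := by
            intro hh
            have := Fin.mk.injEq (i - 1) (by omega : i - 1 < m) (x - 1) hxm ▸ hh
            apply hix
            have h2 : i - 1 = x - 1 := Fin.mk.inj_iff.mp hh
            omega
          have h2 : (⟨i - 1, by omega⟩ : Fin m) ≠ ⟨y - 1, hym⟩ := by
            intro hh
            have h2 : i - 1 = y - 1 := Fin.mk.inj_iff.mp hh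
            apply hiy; omega
          rw [hτ, Equiv.swap_apply_of_ne_of_ne h1 h2,
            Equiv.swap_apply_of_ne_of_ne hix hiy]
          show (i - 1) + 1 = i; omega
    · rw [permFun, dif_neg h]
      rw [Equiv.swap_apply_of_ne_of_ne (by omega) (by omega)]
  -- permFun is multiplicative
  have hmul : ∀ π₁ π₂ : Equiv.Perm (Fin m), permFun m (π₁ * π₂) = permFun m π₁ ∘ permFun m π₂ := by
    intro π₁ π₂
    funext i
    simp only [Function.comp]
    by_cases h : 1 ≤ i ∧ i ≤ m
    · have him : i - 1 < m := by omega
      set j := π₂ ⟨i - 1, him⟩ with hj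
      have hval : permFun m π₂ i = (j : ℕ) + 1 := by rw [permFun, dif_pos h]
      have hcond : 1 ≤ (j : ℕ) + 1 ∧ (j : ℕ) + 1 ≤ m := ⟨by omega, by have := j.2; omega⟩
      have hrhs : permFun m π₁ ((j : ℕ) + 1) = (π₁ ⟨(j : ℕ) + 1 - 1, by omega⟩ : ℕ) + 1 := by
        rw [permFun, dif_pos hcond]
      have hlhs : permFun m (π₁ * π₂) i = (π₁ (π₂ ⟨i - 1, him⟩) : ℕ) + 1 := by
        rw [permFun, dif_pos h]; rfl
      rw [hval, hrhs, hlhs]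
      congr 2
    · have hv2 : permFun m π₂ i = i := by rw [permFun, dif_neg h]
      have hv1 : permFun m π₁ i = i := by rw [permFun, dif_neg h]
      have hv12 : permFun m (π₁ * π₂) i = i := by rw [permFun, dif_neg h]
      rw [hv2, hv1, hv12]
  -- the key sign identity
  have hkey : rename (⇑(Equiv.swap x y)) (specht lam m Q) = - specht lam m Q := by
    have hp1 : p = (p.1, p.2) := rfl
    have hq1 : q = (q.1, p.2) := Prod.ext rfl hc.symm
    have hpq1 : p.1 ≠ q.1 := by
      intro h
      apply hxy
      rw [← hQp, ← hQq]
      congr 1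
      exact Prod.ext h hc
    rcases lt_or_gt_of_ne hpq1 with h | h
    · have := key_swap m lam hla Q hQ.2 p.1 q.1 p.2 h (by rw [← hp1]; exact hp) (by rw [← hq1]; exact hq)
      rw [← hp1, ← hq1, hQp, hQq] at this
      exact this
    · have := key_swap m lam hla Q hQ.2 q.1 p.1 p.2 h (by rw [← hq1]; exact hq) (by rw [← hp1]; exact hp)
      rw [← hq1, ← hp1, hQp, hQq, Equiv.swap_comm] at this
      exact this
  -- the sum is its own negative, hence zero
  set S := ∑ π ∈ youngFinset μ m, rename (permFun m π) (specht lam m Q) with hS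
  have hτinv : ∀ π : Equiv.Perm (Fin m), π * τ * τ = π := by
    intro π
    rw [mul_assoc, hτ, Equiv.swap_mul_self, mul_one]
  have hmem : ∀ π ∈ youngFinset μ m, π * τ ∈ youngFinset μ m := by
    intro π hπ
    simp only [youngFinset, Finset.mem_filter, Finset.mem_univ, true_and] at hπ hτY ⊢
    intro i
    rw [Equiv.Perm.mul_apply, hπ (τ i), hτY i]
  have hneg : S = -S := by
    have hre : S = ∑ π ∈ youngFinset μ m, rename (permFun m (π * τ)) (specht lam m Q) := by
      rw [hS]
      refine Finset.sum_nbij' (fun π => π * τ) (fun π => π * τ) hmem hmem ?_ ?_ ?_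
      · intro π _; exact hτinv π
      · intro π _; exact hτinv π
      · intro π _; rw [hτinv π]
    have this1 : ∀ π ∈ youngFinset μ m,
        rename (permFun m (π * τ)) (specht lam m Q) = - rename (permFun m π) (specht lam m Q) := by
      intro π _
      rw [hmul, ← rename_rename, hperm, hkey, map_neg]
    calc S = ∑ π ∈ youngFinset μ m, rename (permFun m (π * τ)) (specht lam m Q) := hre
      _ = ∑ π ∈ youngFinset μ m, -(rename (permFun m π) (specht lam m Q)) :=
        Finset.sum_congr rfl this1
      _ = -∑ π ∈ youngFinset μ m, rename (permFun m π) (specht lam m Q) :=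
        Finset.sum_neg_distrib _
      _ = -S := by rw [hS]
  have hS0 : S = 0 := by
    have h2 : S + S = 0 := by nth_rewrite 2 [hneg]; rw [add_neg_cancel]
    have h3 : (2 : ℂ) • S = 0 := by rw [two_smul]; exact h2
    rcases smul_eq_zero.mp h3 with h | h
    · exact absurd h two_ne_zero
    · exact h
  rw [hS0, smul_zero]
end

section
/- Let G be a finite group, H ≤ G with index d and |H| invertible in the field K, and ζ : H → K^× a one-dimensional representation. Then the left ideal K[G]·e_ζ of the group algebra, where e_ζ = (1/|H|) Σ_{σ∈H} ζ(σ⁻¹) σ, has K-dimension d = [G : H]. -/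
section Aux

variable {K : Type*} [Field K] {G : Type*} [Group G]
  (H : Subgroup G) [Fintype H] (ζ : H →* Kˣ)

open MonoidAlgebra

/-- `g • e_ζ`. -/
noncomputable def symmV (g : G) : MonoidAlgebra K G :=
  MonoidAlgebra.single g (1 : K) * symmetrizer H ζ

lemma symmV_apply (g x : G) [DecidableEq G] :
    (symmV H ζ g).coeff x
      = (Fintype.card H : K)⁻¹ *
        (∑ σ : H, if g * σ = x then ((ζ σ⁻¹ : Kˣ) : K) else 0) := by
  classical
  unfold symmV symmetrizer
  rw [mul_smul_comm, Finset.mul_sum]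
  simp only [single_mul_single, one_mul]
  rw [coeff_smul, Finsupp.smul_apply, coeff_sum, Finsupp.finset_sum_apply]
  simp only [coeff_single, Finsupp.single_apply, smul_eq_mul]

lemma symmV_apply_self (g : G) : (symmV H ζ g).coeff g = (Fintype.card H : K)⁻¹ := by
  classical
  rw [symmV_apply]
  have h1 : (∑ σ : H, if g * ↑σ = g then ((ζ σ⁻¹ : Kˣ) : K) else 0) = 1 := by
    have h2 : ∀ σ : H, (if g * ↑σ = g then ((ζ σ⁻¹ : Kˣ) : K) else 0)
        = (if σ = 1 then ((ζ σ⁻¹ : Kˣ) : K) else 0) := by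
      intro σ
      congr 1
      simp [mul_eq_left]
    rw [Finset.sum_congr rfl (fun σ _ => h2 σ)]
    simp
  rw [h1, mul_one]

lemma symmV_apply_of_not_mem (g x : G) (h : g⁻¹ * x ∉ H) : (symmV H ζ g).coeff x = 0 := by
  classical
  rw [symmV_apply]
  rw [Finset.sum_eq_zero, mul_zero]
  intro σ _
  rw [if_neg]
  intro he
  exact h (by rw [← he]; simpa using σ.2)

lemma symmV_mul_mem (g : G) (h : H) :
    symmV H ζ (g * h) = ((ζ h : Kˣ) : K) • symmV H ζ g := by
  classical
  ext x
  have hl : (((ζ h : Kˣ) : K) • symmV H ζ g).coeff x = ((ζ h : Kˣ) : K) * (symmV H ζ g).coeff x := rfl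
  rw [hl, symmV_apply, symmV_apply]
  rw [← mul_assoc, mul_comm ((ζ h : Kˣ) : K), mul_assoc]
  congr 1
  rw [Finset.mul_sum]
  refine Fintype.sum_equiv (Equiv.mulLeft h) _ _ (fun σ => ?_)
  simp only [Equiv.coe_mulLeft]
  by_cases he : g * ↑h * ↑σ = x
  · rw [if_pos he]; simp only [Subgroup.coe_mul, ← mul_assoc, he, ↓reduceIte]
    rw [mul_inv_rev, map_mul, map_inv]
    push_cast
    field_simp
    rw [← Units.val_mul, ← map_mul, mul_inv_cancel, map_one, Units.val_one]
  · rw [if_neg he]; simp only [Subgroup.coe_mul, ← mul_assoc, he, ↓reduceIte, mul_zero]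

end Aux

/-- The left ideal `K[G]·e_ζ` has `K`-dimension `[G : H]`. -/
theorem stmt17 {K : Type*} [Field K] {G : Type*} [Group G] [Fintype G]
    (H : Subgroup G) [Fintype H] (hH : (Fintype.card H : K) ≠ 0) (ζ : H →* Kˣ) :
    Module.finrank K
        ((Submodule.span (MonoidAlgebra K G) {symmetrizer H ζ}).restrictScalars K)
      = H.index := by
  classical
  set e := symmetrizer H ζ with he
  set w : G ⧸ H → MonoidAlgebra K G := fun c => symmV H ζ c.out with hw
  have hout : ∀ c : G ⧸ H, (c.out : G ⧸ H) = c := fun c => Quotient.out_eq c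
  -- each symmV lies in the span of range w
  have hVmem : ∀ g : G, symmV H ζ g ∈ Submodule.span K (Set.range w) := by
    intro g
    have h1 : ((g : G ⧸ H) : G ⧸ H).out⁻¹ * g ∈ H := by
      rw [← QuotientGroup.eq]
      exact hout _
    have h2 : g = ((g : G ⧸ H)).out * (⟨_, h1⟩ : H) :=
      (mul_inv_cancel_left _ _).symm
    rw [h2, symmV_mul_mem]
    exact Submodule.smul_mem _ _ (Submodule.subset_span ⟨(g : G ⧸ H), rfl⟩)
  -- the restricted span equals span K (range w)
  have hspan : (Submodule.span (MonoidAlgebra K G) {e}).restrictScalars K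
      = Submodule.span K (Set.range w) := by
    apply le_antisymm
    · intro x hx
      rw [Submodule.restrictScalars_mem, Submodule.mem_span_singleton] at hx
      obtain ⟨a, rfl⟩ := hx
      have : a • e = a * e := rfl
      rw [this]
      have ha : a * e = ∑ g ∈ a.coeff.support, a.coeff g • symmV H ζ g := by
        conv_lhs => rw [← MonoidAlgebra.sum_coeff_single a]
        rw [Finsupp.sum, Finset.sum_mul]
        refine Finset.sum_congr rfl (fun g _ => ?_)
        rw [symmV, ← smul_mul_assoc, MonoidAlgebra.smul_single', mul_one]
      rw [ha]
      exact Submodule.sum_mem _ (fun g _ => Submodule.smul_mem _ _ (hVmem g))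
    · rw [Submodule.span_le]
      rintro _ ⟨c, rfl⟩
      rw [SetLike.mem_coe, Submodule.restrictScalars_mem]
      exact Submodule.smul_mem _ (MonoidAlgebra.single c.out 1)
        (Submodule.mem_span_singleton_self e)
  -- linear independence of w
  have hli : LinearIndependent K w := by
    rw [linearIndependent_iff']
    intro s g hsum j hj
    have happ : (∑ i ∈ s, g i • w i).coeff j.out = 0 := by rw [hsum]; rfl
    rw [MonoidAlgebra.coeff_sum, Finsupp.finset_sum_apply] at happ
    have hterm : ∀ i ∈ s, (g i • w i).coeff j.out = g i * (w i).coeff j.out := fun i _ => rfl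
    rw [Finset.sum_congr rfl hterm] at happ
    rw [Finset.sum_eq_single_of_mem j hj] at happ
    · rw [hw, symmV_apply_self] at happ
      rcases mul_eq_zero.mp happ with h | h
      · exact h
      · exact absurd h (inv_ne_zero hH)
    · intro i _ hij
      rw [hw, symmV_apply_of_not_mem, mul_zero]
      intro hc
      have h3 : (i.out : G ⧸ H) = (j.out : G ⧸ H) := QuotientGroup.eq.mpr hc
      rw [hout, hout] at h3
      exact hij h3
  rw [hspan, finrank_span_eq_card hli]
  rw [Subgroup.index, Nat.card_eq_fintype_card]
end
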